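/- arXiv:2211.14390 — 4 statements merged into one kernel-verified Lean document; each statement's English description precedes it below -/
import Mathlib

section
/- (Theorem 1, weak form.) Let N be an odd natural number and let a₀,…,a_N : ℝ → ℝ be smooth functions all of whose derivatives have at most polynomial growth. Define G(t) = Σ_{n=0}^{(N−1)/2} a_{2n}^{(2n)}(t) and F(t) = Σ_{n=0}^{(N−1)/2} a_{2n+1}^{(2n)}(t), where a^{(k)} denotes the k-th derivative. Suppose T is a tempered distribution on ℝ² (a continuous linear functional on the Schwartz space) satisfying, for every Schwartz function φ : ℝ² → ℝ, T(−∂ₜ²φ + ∂ₓ²φ) = Σ_{n=0}^{N} ∫_ℝ a_n(t)(−1)ⁿ(∂ₓⁿφ)(t,0) dt. Define T̄ = T − D, where D is the tempered distribution D(φ) = Σ_{i=0}^{(N−1)/2−1} [ ∫_ℝ (Σ_{n=0}^{(N−1)/2−1−i} a_{2n+2i+2}^{(2n)}(t)) (∂ₓ^{2i}φ)(t,0) dt − ∫_ℝ (Σ_{n=0}^{(N−1)/2−1−i} a_{2n+2i+3}^{(2n)}(t)) (∂ₓ^{2i+1}φ)(t,0) dt ]. Then for every Schwartz function φ, T̄(−∂ₜ²φ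 + ∂ₓ²φ) = ∫_ℝ G(t)φ(t,0) dt − ∫_ℝ F(t)(∂ₓφ)(t,0) dt. -/
open MeasureTheory SchwartzMap Real

/-- Spatial partial derivative `∂ₓ` on Schwartz functions on `ℝ²` (coordinates `(t, x)`). -/
noncomputable def Dx (φ : SchwartzMap (ℝ × ℝ) ℝ) : SchwartzMap (ℝ × ℝ) ℝ :=
  LineDeriv.lineDerivOpCLM ℝ (SchwartzMap (ℝ × ℝ) ℝ) ((0, 1) : ℝ × ℝ) φ

/-- Temporal partial derivative `∂ₜ` on Schwartz functions on `ℝ²`. -/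
noncomputable def Dt (φ : SchwartzMap (ℝ × ℝ) ℝ) : SchwartzMap (ℝ × ℝ) ℝ :=
  LineDeriv.lineDerivOpCLM ℝ (SchwartzMap (ℝ × ℝ) ℝ) ((1, 0) : ℝ × ℝ) φ

/-- The wave operator `□φ = −∂ₜ²φ + ∂ₓ²φ`. -/
noncomputable def waveOp (φ : SchwartzMap (ℝ × ℝ) ℝ) : SchwartzMap (ℝ × ℝ) ℝ :=
  -(Dt (Dt φ)) + Dx (Dx φ)

/-! Along `x = 0`, two integrations by parts in `t` give, for `c` of temperate growth,
`∫ c(t) (□ψ)(t,0) dt = ∫ c(t) (∂ₓ²ψ)(t,0) dt - ∫ c''(t) ψ(t,0) dt`.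
Write `N = 2M + 1`. For each parity `j`, the coefficients `c_i = Σ_{n ≤ M-i} a_{2n+2i+j}^{(2n)}`
satisfy `c_M = a_{2M+j}` and `c_{i+1}'' = c_i - a_{2i+j}`, so pairing `D` with `□φ` telescopes:
it cancels every term of `T(□φ)` except the lowest ones, `∫ c_0 φ(t,0) = ∫ G φ(t,0)` for
`j = 0` and `-∫ c_0 ∂ₓφ(t,0) = -∫ F ∂ₓφ(t,0)` for `j = 1`. -/

open Finset LineDeriv
open scoped ContDiff

namespace Function.HasTemperateGrowth

variable {F : Type*} [NormedAddCommGroup F] [NormedSpace ℝ F] {f : ℝ → F}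

protected theorem deriv (hf : f.HasTemperateGrowth) : (deriv f).HasTemperateGrowth := by
  refine ⟨(contDiff_infty_iff_deriv.1 hf.1).2, fun n => ?_⟩
  obtain ⟨k, C, h⟩ := hf.2 (n + 1)
  refine ⟨k, C, fun x => ?_⟩
  simpa only [norm_iteratedFDeriv_eq_norm_iteratedDeriv, iteratedDeriv_succ'] using h x

protected theorem iteratedDeriv (hf : f.HasTemperateGrowth) (k : ℕ) :
    (iteratedDeriv k f).HasTemperateGrowth := by
  induction k with
  | zero => simpa using hf
  | succ k ih => simpa only [iteratedDeriv_succ] using ih.deriv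

end Function.HasTemperateGrowth

theorem SchwartzMap.lineDerivOp_comm {E F : Type*} [NormedAddCommGroup E] [NormedSpace ℝ E]
    [NormedAddCommGroup F] [NormedSpace ℝ F] (v w : E) (f : 𝓢(E, F)) :
    ∂_{v} (∂_{w} f) = ∂_{w} (∂_{v} f) := by
  ext x
  have hsymm : IsSymmSndFDerivAt ℝ f x :=
    (f.smooth ⊤).contDiffAt.isSymmSndFDerivAt
      (by simp only [minSmoothness_of_isRCLikeNormedField]; norm_cast)
  have hdiff : Differentiable ℝ (fderiv ℝ f) :=
    ((f.smooth ⊤).fderiv_right (m := 1) (by norm_cast)).differentiable one_ne_zero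
  have hsecond (u z : E) :
      fderiv ℝ (fun y => fderiv ℝ f y u) x z = fderiv ℝ (fderiv ℝ f) x z u := by
    rw [fderiv_clm_apply hdiff.differentiableAt (differentiableAt_const u)]
    simp
  simp only [lineDerivOp_apply_eq_fderiv]
  exact (hsecond w v).trans ((hsymm v w).trans (hsecond v w).symm)

theorem Dx_Dt (φ : 𝓢(ℝ × ℝ, ℝ)) : Dx (Dt φ) = Dt (Dx φ) :=
  SchwartzMap.lineDerivOp_comm _ _ φ

theorem Dx_waveOp (φ : 𝓢(ℝ × ℝ, ℝ)) : Dx (waveOp φ) = waveOp (Dx φ) := by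
  simp only [waveOp, ← Dx_Dt]
  simp only [Dx, map_add, map_neg]

theorem iterate_Dx_waveOp (k : ℕ) (φ : 𝓢(ℝ × ℝ, ℝ)) : Dx^[k] (waveOp φ) = waveOp (Dx^[k] φ) :=
  Function.Commute.iterate_left Dx_waveOp k φ

noncomputable def restrictAxis : 𝓢(ℝ × ℝ, ℝ) →L[ℝ] 𝓢(ℝ, ℝ) :=
  SchwartzMap.compCLMOfAntilipschitz ℝ (ContinuousLinearMap.inl ℝ ℝ ℝ).hasTemperateGrowth
    (Isometry.inl (α := ℝ) (β := ℝ)).antilipschitz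

@[simp] theorem restrictAxis_apply (φ : 𝓢(ℝ × ℝ, ℝ)) (t : ℝ) : restrictAxis φ t = φ (t, 0) := rfl

theorem restrictAxis_Dt (φ : 𝓢(ℝ × ℝ, ℝ)) :
    restrictAxis (Dt φ) = SchwartzMap.derivCLM ℝ ℝ (restrictAxis φ) := by
  ext t
  have hinl : HasDerivAt (fun s : ℝ => ((s, 0) : ℝ × ℝ)) (1, 0) t :=
    (hasDerivAt_id t).prodMk (hasDerivAt_const t 0)
  rw [SchwartzMap.derivCLM_apply, show ⇑(restrictAxis φ) = φ ∘ fun s => (s, 0) from rfl,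
    ((φ.hasFDerivAt (t, 0)).comp_hasDerivAt t hinl).deriv]
  simp [Dt, SchwartzMap.lineDerivOp_apply_eq_fderiv]

section IntegrationByParts

variable {b : ℝ → ℝ}

theorem integrable_mul_of_hasTemperateGrowth (hb : b.HasTemperateGrowth) (ψ : 𝓢(ℝ, ℝ)) :
    Integrable fun t => b t * ψ t := by
  simpa only [SchwartzMap.bilinLeftCLM_apply, ContinuousLinearMap.mul_apply', mul_comm (ψ _)]
    using (SchwartzMap.bilinLeftCLM (ContinuousLinearMap.mul ℝ ℝ) hb ψ).integrable (μ := volume)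

theorem integral_mul_deriv_eq_neg_deriv_mul_of_hasTemperateGrowth (hb : b.HasTemperateGrowth)
    (ψ : 𝓢(ℝ, ℝ)) :
    ∫ t, b t * SchwartzMap.derivCLM ℝ ℝ ψ t = -∫ t, deriv b t * ψ t :=
  integral_mul_deriv_eq_deriv_mul_of_integrable
    (fun t _ => (hb.1.differentiable (by simp)).differentiableAt.hasDerivAt)
    (fun t _ => ψ.hasDerivAt t)
    (integrable_mul_of_hasTemperateGrowth hb _) (integrable_mul_of_hasTemperateGrowth hb.deriv ψ)
    (integrable_mul_of_hasTemperateGrowth hb ψ)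

theorem integral_mul_deriv_deriv_of_hasTemperateGrowth (hb : b.HasTemperateGrowth)
    (ψ : 𝓢(ℝ, ℝ)) :
    ∫ t, b t * SchwartzMap.derivCLM ℝ ℝ (SchwartzMap.derivCLM ℝ ℝ ψ) t
      = ∫ t, deriv (deriv b) t * ψ t := by
  rw [integral_mul_deriv_eq_neg_deriv_mul_of_hasTemperateGrowth hb,
    integral_mul_deriv_eq_neg_deriv_mul_of_hasTemperateGrowth hb.deriv, neg_neg]

end IntegrationByParts

noncomputable def axisIntegral (b : ℝ → ℝ) (ψ : 𝓢(ℝ × ℝ, ℝ)) : ℝ :=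
  ∫ t, b t * ψ (t, 0)

theorem axisIntegral_sub_left {b c : ℝ → ℝ} (hb : b.HasTemperateGrowth)
    (hc : c.HasTemperateGrowth) (ψ : 𝓢(ℝ × ℝ, ℝ)) :
    axisIntegral (b - c) ψ = axisIntegral b ψ - axisIntegral c ψ := by
  simp only [axisIntegral, Pi.sub_apply, sub_mul]
  exact integral_sub (integrable_mul_of_hasTemperateGrowth hb (restrictAxis ψ))
    (integrable_mul_of_hasTemperateGrowth hc (restrictAxis ψ))

theorem axisIntegral_waveOp {b : ℝ → ℝ} (hb : b.HasTemperateGrowth) (ψ : 𝓢(ℝ × ℝ, ℝ)) :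
    axisIntegral b (waveOp ψ)
      = axisIntegral b (Dx (Dx ψ)) - axisIntegral (deriv (deriv b)) ψ := by
  have hwave (t : ℝ) : b t * waveOp ψ (t, 0)
      = b t * restrictAxis (Dx (Dx ψ)) t - b t * restrictAxis (Dt (Dt ψ)) t := by
    simp only [waveOp, restrictAxis_apply, add_apply, neg_apply]
    ring
  simp only [axisIntegral, hwave]
  rw [integral_sub (integrable_mul_of_hasTemperateGrowth hb _)
      (integrable_mul_of_hasTemperateGrowth hb _), restrictAxis_Dt, restrictAxis_Dt,
    integral_mul_deriv_deriv_of_hasTemperateGrowth hb]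
  rfl

/-- With `N = 2M + 1`: `G = waveTail a (M + 1) 0`, `F = waveTail a (M + 1) 1`, and the `i`-th
coefficients of `D` are `waveTail a (M - i) (2i + 2)` and `waveTail a (M - i) (2i + 3)`. -/
noncomputable def waveTail (a : ℕ → ℝ → ℝ) (m s : ℕ) (t : ℝ) : ℝ :=
  ∑ n ∈ range m, iteratedDeriv (2 * n) (a (2 * n + s)) t

theorem waveTail_hasTemperateGrowth {a : ℕ → ℝ → ℝ} {m s : ℕ}
    (ha : ∀ n < m, (a (2 * n + s)).HasTemperateGrowth) : (waveTail a m s).HasTemperateGrowth :=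
  .sum fun n hn => (ha n (mem_range.1 hn)).iteratedDeriv _

theorem waveTail_one (a : ℕ → ℝ → ℝ) (s : ℕ) : waveTail a 1 s = a s := by
  ext t
  simp [waveTail]

theorem deriv_deriv_waveTail {a : ℕ → ℝ → ℝ} {m s : ℕ}
    (ha : ∀ n < m, ContDiff ℝ ∞ (a (2 * n + (s + 2)))) :
    deriv (deriv (waveTail a m (s + 2))) = waveTail a (m + 1) s - a s := by
  have hderiv (k : ℕ) :
      deriv (fun t => ∑ n ∈ range m, iteratedDeriv (2 * n + k) (a (2 * n + (s + 2))) t)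
        = fun t => ∑ n ∈ range m, iteratedDeriv (2 * n + k + 1) (a (2 * n + (s + 2))) t := by
    ext t
    rw [deriv_fun_sum fun n hn => ((ha n (mem_range.1 hn)).differentiable_iteratedDeriv _
      (WithTop.coe_lt_coe.2 (ENat.natCast_lt_top _))).differentiableAt]
    simp only [iteratedDeriv_succ]
  have h0 := hderiv 0
  simp only [add_zero] at h0
  unfold waveTail
  rw [h0, hderiv 1]
  ext t
  simp only [Pi.sub_apply, sum_range_succ', iteratedDeriv_zero, mul_zero, zero_add,
    add_sub_cancel_right]
  refine sum_congr rfl fun n _ => ?_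
  rw [show 2 * (n + 1) = 2 * n + 1 + 1 by ring, show 2 * n + 1 + 1 + s = 2 * n + (s + 2) by ring]

theorem iterate_Dx_add_two (k : ℕ) (φ : 𝓢(ℝ × ℝ, ℝ)) : Dx^[k + 2] φ = Dx (Dx (Dx^[k] φ)) := by
  rw [Function.iterate_succ_apply', Function.iterate_succ_apply']

theorem sum_axisIntegral_sub_sum_axisIntegral_waveTail {a : ℕ → ℝ → ℝ} {M j : ℕ}
    (ha : ∀ n ≤ 2 * M + j, (a n).HasTemperateGrowth) (φ : 𝓢(ℝ × ℝ, ℝ)) :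
    ∑ i ∈ range (M + 1), axisIntegral (a (2 * i + j)) (Dx^[2 * i + j] φ)
      - ∑ i ∈ range M,
          axisIntegral (waveTail a (M - i) (2 * i + 2 + j)) (Dx^[2 * i + j] (waveOp φ))
      = axisIntegral (waveTail a (M + 1) j) (Dx^[j] φ) := by
  set u : ℕ → ℝ :=
    fun i => axisIntegral (waveTail a (M + 1 - i) (2 * i + j)) (Dx^[2 * i + j] φ)
  have hstep : ∀ i ∈ range M,
      axisIntegral (waveTail a (M - i) (2 * i + 2 + j)) (Dx^[2 * i + j] (waveOp φ))
        = u (i + 1) - u i + axisIntegral (a (2 * i + j)) (Dx^[2 * i + j] φ) := by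
    intro i hi
    have hiM := mem_range.1 hi
    have htail := waveTail_hasTemperateGrowth (a := a) (m := M - i) (s := 2 * i + 2 + j)
      fun n hn => ha _ (by omega)
    rw [iterate_Dx_waveOp, axisIntegral_waveOp htail, show 2 * i + 2 + j = 2 * i + j + 2 by ring,
      deriv_deriv_waveTail fun n hn => (ha _ (by omega)).1,
      axisIntegral_sub_left (waveTail_hasTemperateGrowth fun n hn => ha _ (by omega))
        (ha _ (by omega))]
    simp only [u, show M + 1 - (i + 1) = M - i by omega, show M + 1 - i = M - i + 1 by omega,
      show 2 * (i + 1) + j = 2 * i + j + 2 by ring, iterate_Dx_add_two]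
    ring
  rw [sum_congr rfl hstep, sum_add_distrib, sum_range_sub, sum_range_succ]
  simp only [u, Nat.add_sub_cancel_left, waveTail_one, Nat.sub_zero, mul_zero, zero_add]
  ring

theorem sum_range_two_mul_neg_one_pow_mul {R : Type*} [CommRing R] (f : ℕ → R) (m : ℕ) :
    ∑ n ∈ range (2 * m), (-1) ^ n * f n
      = ∑ i ∈ range m, f (2 * i) - ∑ i ∈ range m, f (2 * i + 1) := by
  induction m with
  | zero => simp
  | succ m ih =>
    rw [show 2 * (m + 1) = 2 * m + 1 + 1 by ring, sum_range_succ, sum_range_succ, ih,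
      sum_range_succ, sum_range_succ, pow_succ, pow_mul]
    ring

/-- Theorem 1 of the paper (weak form): if `T` weakly solves
`□T = Σ_{n=0}^N aₙ(t) δ⁽ⁿ⁾(x)` with `N` odd, then `T̄ = T − D` weakly solves
`□T̄ = G(t) δ(x) + F(t) δ'(x)`. -/
theorem theorem1_weak_form (N : ℕ) (hN : Odd N) (a : ℕ → ℝ → ℝ)
    (ha : ∀ n ≤ N, Function.HasTemperateGrowth (a n))
    (G F : ℝ → ℝ)
    (hG : G = fun t => ∑ n ∈ Finset.range ((N - 1) / 2 + 1),
      iteratedDeriv (2 * n) (a (2 * n)) t)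
    (hF : F = fun t => ∑ n ∈ Finset.range ((N - 1) / 2 + 1),
      iteratedDeriv (2 * n) (a (2 * n + 1)) t)
    (T : SchwartzMap (ℝ × ℝ) ℝ →L[ℝ] ℝ)
    (hT : ∀ φ : SchwartzMap (ℝ × ℝ) ℝ,
      T (waveOp φ) = ∑ n ∈ Finset.range (N + 1),
        ∫ t : ℝ, a n t * ((-1 : ℝ) ^ n * (Dx^[n] φ) (t, 0)))
    (D Tbar : SchwartzMap (ℝ × ℝ) ℝ → ℝ)
    (hD : D = fun φ => ∑ i ∈ Finset.range ((N - 1) / 2),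
      ((∫ t : ℝ, (∑ n ∈ Finset.range ((N - 1) / 2 - i),
          iteratedDeriv (2 * n) (a (2 * n + 2 * i + 2)) t) * (Dx^[2 * i] φ) (t, 0))
        - ∫ t : ℝ, (∑ n ∈ Finset.range ((N - 1) / 2 - i),
          iteratedDeriv (2 * n) (a (2 * n + 2 * i + 3)) t) * (Dx^[2 * i + 1] φ) (t, 0)))
    (hTbar : Tbar = fun φ => T φ - D φ) :
    ∀ φ : SchwartzMap (ℝ × ℝ) ℝ,
      Tbar (waveOp φ) = (∫ t : ℝ, G t * φ (t, 0)) - ∫ t : ℝ, F t * (Dx φ) (t, 0) := by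
  intro φ
  obtain ⟨M, rfl⟩ := hN
  have hM : (2 * M + 1 - 1) / 2 = M := by omega
  have hsplit :=
    sum_range_two_mul_neg_one_pow_mul (fun n => axisIntegral (a n) (Dx^[n] φ)) (M + 1)
  have heven := sum_axisIntegral_sub_sum_axisIntegral_waveTail (M := M) (j := 0)
    (fun n hn => ha n (by omega)) φ
  have hodd := sum_axisIntegral_sub_sum_axisIntegral_waveTail (M := M) (j := 1)
    (fun n hn => ha n (by omega)) φ
  subst hG hF hD hTbar
  simp only [hM, hT, show 2 * M + 1 + 1 = 2 * (M + 1) by ring, mul_left_comm (a _ _),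
    integral_const_mul, sum_sub_distrib]
  -- `ring1!` matches the integrals of the statement with their `axisIntegral` / `waveTail` forms
  -- up to unfolding.
  linear_combination (norm := ring1!) hsplit + heven - hodd
end

section
/- The distribution ψ(t,x) = cos(t)δ(x) + H(x)sin(t−x) solves the advection equation ∂ₜψ + ∂ₓψ = cos(t)δ'(x) weakly; precisely, for every Schwartz function φ : ℝ² → ℝ, −∫_ℝ cos(t)(∂ₜφ + ∂ₓφ)(t,0) dt − ∫_ℝ ∫_{0}^{∞} sin(t−x)(∂ₜφ + ∂ₓφ)(t,x) dx dt = −∫_ℝ cos(t)(∂ₓφ)(t,0) dt. -/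
open MeasureTheory SchwartzMap Real

/-!
Write `∂ₜ + ∂ₓ = ∂_{(1,1)}`. Integrating by parts in `t` on the line `x = 0` turns
`∫ cos t · ∂ₜφ(t, 0)` into `∫ sin t · φ(t, 0)`. In the Heaviside term substitute `t = u + x`:
`sin (t - x)` becomes `sin u`, and `x ↦ φ(u + x, x)` runs along a characteristic, so
`∫_{x > 0} ∂_{(1,1)}φ(u + x, x) dx = -φ(u, 0)` and the double integral is `-∫ sin u · φ(u, 0)`.
The two contributions cancel, leaving `-∫ cos t · ∂ₓφ(t, 0)`. All integrability and decay along
lines comes from the fact that a Schwartz function restricted to a line is a Schwartz function.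
-/

open Set Filter LineDeriv

lemma antilipschitzWith_const_add_smul {E : Type*} [NormedAddCommGroup E] [NormedSpace ℝ E]
    (p : E) {v : E} (hv : v ≠ 0) : AntilipschitzWith ‖v‖₊⁻¹ (fun s : ℝ => p + s • v) := by
  refine AntilipschitzWith.of_le_mul_dist fun s t => ?_
  rw [dist_add_left, dist_eq_norm, dist_eq_norm, ← sub_smul, norm_smul, NNReal.coe_inv,
    coe_nnnorm, mul_left_comm, inv_mul_cancel₀ (norm_ne_zero_iff.mpr hv), mul_one]

theorem integral_integral_add_prod {G E : Type*} [MeasurableSpace G] [AddGroup G]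
    [MeasurableAdd₂ G] [NormedAddCommGroup E] [NormedSpace ℝ E] (μ ν : Measure G) [SFinite μ]
    [SFinite ν] [μ.IsAddRightInvariant] {f : G → G → E}
    (hf : Integrable (Function.uncurry f) (μ.prod ν)) :
    ∫ t, ∫ x, f t x ∂ν ∂μ = ∫ u, ∫ x, f (u + x) x ∂ν ∂μ := by
  have hshear := measurePreserving_add_prod μ ν
  have hf' : Integrable (fun z : G × G => f (z.1 + z.2) z.2) (μ.prod ν) :=
    (hshear.integrable_comp hf.aestronglyMeasurable).mpr hf
  have h := integral_map hshear.aemeasurable (hshear.map_eq ▸ hf.aestronglyMeasurable)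
  rw [hshear.map_eq] at h
  rwa [integral_integral hf, integral_integral hf']

namespace SchwartzMap

variable {E F : Type*} [NormedAddCommGroup E] [NormedSpace ℝ E]
  [NormedAddCommGroup F] [NormedSpace ℝ F]

noncomputable def restrictLineCLM (p : E) {v : E} (hv : v ≠ 0) : 𝓢(E, F) →L[ℝ] 𝓢(ℝ, F) :=
  compCLMOfAntilipschitz ℝ
    ((Function.HasTemperateGrowth.const p).add
      (ContinuousLinearMap.toSpanSingleton ℝ v).hasTemperateGrowth)
    (antilipschitzWith_const_add_smul p hv)

@[simp]
lemma restrictLineCLM_apply (p : E) {v : E} (hv : v ≠ 0) (f : 𝓢(E, F)) (s : ℝ) :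
    restrictLineCLM p hv f s = f (p + s • v) :=
  rfl

lemma hasDerivAt_restrictLineCLM (p : E) {v : E} (hv : v ≠ 0) (f : 𝓢(E, F)) (s : ℝ) :
    HasDerivAt (restrictLineCLM p hv f) (restrictLineCLM p hv (∂_{v} f) s) s := by
  have hline : HasDerivAt (fun s : ℝ => p + s • v) v s := by
    simpa using ((hasDerivAt_id s).smul_const v).const_add p
  exact (f.hasFDerivAt _).comp_hasDerivAt s hline

lemma integral_Ioi_lineDerivOp_add_smul [CompleteSpace F] (p : E) {v : E} (hv : v ≠ 0)
    (f : 𝓢(E, F)) : ∫ x in Ioi (0 : ℝ), ∂_{v} f (p + x • v) = -f p := by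
  have h := integral_Ioi_of_hasDerivAt_of_tendsto (a := 0)
    (restrictLineCLM p hv f).continuous.continuousWithinAt
    (fun x _ => hasDerivAt_restrictLineCLM p hv f x)
    (restrictLineCLM p hv (∂_{v} f)).integrable.integrableOn
    ((restrictLineCLM p hv f).tendsto_cocompact.mono_left atTop_le_cocompact)
  simpa using h

lemma integrable_bdd_mul_add_smul (p : E) {v : E} (hv : v ≠ 0) (f : 𝓢(E, ℝ)) {c : ℝ → ℝ}
    {C : ℝ} (hc : Continuous c) (hC : ∀ t, ‖c t‖ ≤ C) :
    Integrable fun t => c t * f (p + t • v) :=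
  (restrictLineCLM p hv f).integrable.bdd_mul hc.aestronglyMeasurable (Eventually.of_forall hC)

lemma integral_cos_mul_lineDerivOp_add_smul (p : E) {v : E} (hv : v ≠ 0) (f : 𝓢(E, ℝ)) :
    ∫ t, cos t * ∂_{v} f (p + t • v) = ∫ t, sin t * f (p + t • v) := by
  have h := integral_mul_deriv_eq_deriv_mul_of_integrable (u := cos) (u' := fun t => -sin t)
    (v := restrictLineCLM p hv f) (v' := restrictLineCLM p hv (∂_{v} f))
    (fun t _ => hasDerivAt_cos t) (fun t _ => hasDerivAt_restrictLineCLM p hv f t)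
    (integrable_bdd_mul_add_smul p hv (∂_{v} f) continuous_cos abs_cos_le_one)
    (integrable_bdd_mul_add_smul p hv f continuous_sin.neg (by simpa using abs_sin_le_one))
    (integrable_bdd_mul_add_smul p hv f continuous_cos abs_cos_le_one)
  simpa [integral_neg] using h

lemma integrable_bdd_mul_prod_restrict (f : 𝓢(ℝ × ℝ, ℝ)) (s : Set ℝ) {c : ℝ × ℝ → ℝ} {C : ℝ}
    (hc : Continuous c) (hC : ∀ z, ‖c z‖ ≤ C) :
    Integrable (fun z => c z * f z) (volume.prod (volume.restrict s)) := by
  have hμ : (volume : Measure ℝ).prod (volume.restrict s) ≤ volume := by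
    rw [Measure.volume_eq_prod]
    exact Measure.prod_mono le_rfl Measure.restrict_le_self
  exact (f.integrable.mono_measure hμ).bdd_mul hc.aestronglyMeasurable (Eventually.of_forall hC)

end SchwartzMap

/-- The distribution `ψ(t,x) = cos(t)δ(x) + H(x)sin(t−x)` solves the advection
equation `∂ₜψ + ∂ₓψ = cos(t)δ'(x)` weakly. -/
theorem advection_solution_with_delta (φ : SchwartzMap (ℝ × ℝ) ℝ) :
    (-(∫ t : ℝ, Real.cos t * (Dt φ + Dx φ) (t, 0)))
      - (∫ t : ℝ, ∫ x in Set.Ioi (0 : ℝ), Real.sin (t - x) * (Dt φ + Dx φ) (t, x))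
      = -(∫ t : ℝ, Real.cos t * (Dx φ) (t, 0)) := by
  have hτ : ((1, 0) : ℝ × ℝ) ≠ 0 := by simp
  have hχ : ((1, 1) : ℝ × ℝ) ≠ 0 := by simp
  have hΦ : Dt φ + Dx φ = ∂_{((1, 1) : ℝ × ℝ)} φ := by
    rw [show ((1, 1) : ℝ × ℝ) = (1, 0) + (0, 1) by simp, lineDerivOp_left_add]
    rfl
  have h_parts : ∫ t, cos t * Dt φ (t, 0) = ∫ t, sin t * φ (t, 0) := by
    change ∫ t, cos t * ∂_{((1, 0) : ℝ × ℝ)} φ (t, 0) = _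
    simpa using integral_cos_mul_lineDerivOp_add_smul 0 hτ φ
  have h_char (u : ℝ) : ∫ x in Ioi (0 : ℝ), ∂_{((1, 1) : ℝ × ℝ)} φ (u + x, x) = -φ (u, 0) := by
    simpa using integral_Ioi_lineDerivOp_add_smul (u, 0) hχ φ
  have h_heaviside : ∫ t, ∫ x in Ioi (0 : ℝ), sin (t - x) * (Dt φ + Dx φ) (t, x)
      = -∫ t, sin t * φ (t, 0) := by
    rw [hΦ, integral_integral_add_prod _ _ (integrable_bdd_mul_prod_restrict _ _
      (continuous_sin.comp continuous_sub) fun _ => abs_sin_le_one _)]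
    simp [integral_const_mul, h_char, integral_neg]
  have h_delta : ∫ t, cos t * (Dt φ + Dx φ) (t, 0)
      = (∫ t, cos t * Dt φ (t, 0)) + ∫ t, cos t * Dx φ (t, 0) := by
    have h_int (ψ : 𝓢(ℝ × ℝ, ℝ)) : Integrable fun t => cos t * ψ (t, 0) := by
      simpa using integrable_bdd_mul_add_smul 0 hτ ψ continuous_cos abs_cos_le_one
    simp only [add_apply, mul_add]
    exact integral_add (h_int _) (h_int _)
  rw [h_delta, h_heaviside, h_parts]
  ring
end

section
/- The distribution Ψ(t,x) = cos(t)δ(x) + (1/2)sin(t−|x|) solves −∂ₜ²Ψ + ∂ₓ²Ψ = cos(t)δ''(x) weakly; precisely, for every Schwartz function φ : ℝ² → ℝ, ∫_ℝ cos(t)·(−∂ₜ²φ + ∂ₓ²φ)(t,0) dt + ∫_{ℝ²} (1/2)sin(t−|x|)·(−∂ₜ²φ + ∂ₓ²φ)(t,x) dx dt = ∫_ℝ cos(t)(∂ₓ²φ)(t,0) dt. -/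
/-!
The smooth part of `Ψ` is `G (t - |x|)` with `G = sin / 2`, and `G'' = -G`. Integrating by
parts twice in `t` turns `∫∫ G(t - |x|) ∂ₜ²φ` into `-∫∫ G(t - |x|) φ`. In `x` the same happens
on each half-line, but the kink of `|x|` at `x = 0` leaves the boundary terms
`-2 ∫ G'(t) φ(t, 0) = -∫ cos t φ(t, 0)`, so the smooth part contributes exactly that.
For the singular part `cos t δ(x)`, two integrations by parts in `t` give
`∫ cos t (-∂ₜ²φ)(t, 0) = ∫ cos t φ(t, 0)`, cancelling the smooth part.
All boundary terms at infinity vanish because the slices of `φ` are Schwartz functions and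
`G`, `G'` are bounded, by conservation of `G² + G'²`.
-/

open MeasureTheory SchwartzMap Real
open Filter Topology Set

section Slices
variable {E F : Type*} [NormedAddCommGroup E] [NormedSpace ℝ E] [NormedAddCommGroup F]
  [NormedSpace ℝ F]

lemma hasTemperateGrowth_prodMk_const (f : F) : (fun e : E => (e, f)).HasTemperateGrowth := by
  have : (fun e : E => (e, f)) = fun e => ContinuousLinearMap.inl ℝ E F e + (0, f) := by
    ext e <;> simp
  rw [this]
  fun_prop

lemma hasTemperateGrowth_const_prodMk (e : E) : (fun f : F => (e, f)).HasTemperateGrowth := by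
  have : (fun f : F => (e, f)) = fun f => ContinuousLinearMap.inr ℝ E F f + (e, 0) := by
    ext f <;> simp
  rw [this]
  fun_prop

end Slices

noncomputable def sliceT (φ : 𝓢(ℝ × ℝ, ℝ)) (x : ℝ) : 𝓢(ℝ, ℝ) :=
  compCLM ℝ (hasTemperateGrowth_prodMk_const x) ⟨1, 1, fun t => by
    simpa using le_add_of_nonneg_of_le zero_le_one (norm_fst_le (t, x))⟩ φ

noncomputable def sliceX (φ : 𝓢(ℝ × ℝ, ℝ)) (t : ℝ) : 𝓢(ℝ, ℝ) :=
  compCLM ℝ (hasTemperateGrowth_const_prodMk t) ⟨1, 1, fun x => by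
    simpa using le_add_of_nonneg_of_le zero_le_one (norm_snd_le (t, x))⟩ φ

@[simp] lemma sliceT_apply (φ : 𝓢(ℝ × ℝ, ℝ)) (x t : ℝ) : sliceT φ x t = φ (t, x) := rfl
@[simp] lemma sliceX_apply (φ : 𝓢(ℝ × ℝ, ℝ)) (t x : ℝ) : sliceX φ t x = φ (t, x) := rfl

lemma deriv_sliceT (φ : 𝓢(ℝ × ℝ, ℝ)) (x : ℝ) : deriv (sliceT φ x) = sliceT (Dt φ) x := by
  ext t
  exact ((φ.hasFDerivAt (t, x)).comp_hasDerivAt t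
    ((hasDerivAt_id t).prodMk (hasDerivAt_const t x))).deriv

lemma deriv_sliceX (φ : 𝓢(ℝ × ℝ, ℝ)) (t : ℝ) : deriv (sliceX φ t) = sliceX (Dx φ) t := by
  ext x
  exact ((φ.hasFDerivAt (t, x)).comp_hasDerivAt x
    ((hasDerivAt_const x t).prodMk (hasDerivAt_id x))).deriv

structure IsHarmonicOscillator (g g' : ℝ → ℝ) : Prop where
  hasDerivAt : ∀ x, HasDerivAt g (g' x) x
  hasDerivAt_deriv : ∀ x, HasDerivAt g' (-g x) x

namespace IsHarmonicOscillator

variable {g g' : ℝ → ℝ} (hg : IsHarmonicOscillator g g')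
include hg

lemma derivative : IsHarmonicOscillator g' (fun x => -g x) :=
  ⟨hg.hasDerivAt_deriv, fun x => (hg.hasDerivAt x).neg⟩

lemma comp_neg : IsHarmonicOscillator (fun x => g (-x)) (fun x => -g' (-x)) :=
  ⟨fun x => ((hg.hasDerivAt (-x)).comp x (hasDerivAt_neg x)).congr_deriv (by ring),
    fun x => ((hg.hasDerivAt_deriv (-x)).comp x (hasDerivAt_neg x)).neg.congr_deriv (by ring)⟩

lemma const_mul (c : ℝ) : IsHarmonicOscillator (fun x => c * g x) (fun x => c * g' x) :=
  ⟨fun x => (hg.hasDerivAt x).const_mul c,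
    fun x => ((hg.hasDerivAt_deriv x).const_mul c).congr_deriv (by ring)⟩

lemma comp_sub_const (c : ℝ) : IsHarmonicOscillator (fun x => g (x - c)) (fun x => g' (x - c)) :=
  ⟨fun x => by simpa using (hg.hasDerivAt (x - c)).comp_sub_const x c,
    fun x => by simpa using (hg.hasDerivAt_deriv (x - c)).comp_sub_const x c⟩

lemma comp_const_sub (c : ℝ) :
    IsHarmonicOscillator (fun x => g (c - x)) (fun x => -g' (c - x)) :=
  ⟨fun x => by simpa using (hg.hasDerivAt (c - x)).comp_const_sub c x,
    fun x => by simpa using ((hg.hasDerivAt_deriv (c - x)).comp_const_sub c x).fun_neg⟩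

lemma continuous : Continuous g :=
  continuous_iff_continuousAt.2 fun x => (hg.hasDerivAt x).continuousAt

lemma sq_add_sq_eq (x : ℝ) : g x ^ 2 + g' x ^ 2 = g 0 ^ 2 + g' 0 ^ 2 := by
  have hE (y : ℝ) : HasDerivAt (fun y => g y ^ 2 + g' y ^ 2) 0 y :=
    (((hg.hasDerivAt y).fun_pow 2).fun_add ((hg.hasDerivAt_deriv y).fun_pow 2)).congr_deriv
      (by ring)
  exact is_const_of_deriv_eq_zero (fun y => (hE y).differentiableAt) (fun y => (hE y).deriv) x 0

lemma abs_le (x : ℝ) : |g x| ≤ √(g 0 ^ 2 + g' 0 ^ 2) :=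
  Real.abs_le_sqrt (by nlinarith [hg.sq_add_sq_eq x, sq_nonneg (g' x)])

lemma integrable_mul {f : ℝ → ℝ} (hf : Integrable f) : Integrable (fun x => g x * f x) :=
  hf.bdd_mul hg.continuous.aestronglyMeasurable (ae_of_all _ hg.abs_le)

lemma tendsto_mul_cocompact (v : 𝓢(ℝ, ℝ)) :
    Tendsto (fun x => g x * v x) (cocompact ℝ) (𝓝 0) :=
  isBoundedUnder_le_mul_tendsto_zero (isBoundedUnder_of ⟨_, hg.abs_le⟩) v.tendsto_cocompact

lemma integral_Ioi_mul_deriv (v : 𝓢(ℝ, ℝ)) (a : ℝ) :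
    ∫ x in Ioi a, g x * deriv v x = -(g a * v a) - ∫ x in Ioi a, g' x * v x := by
  simpa using integral_Ioi_mul_deriv_eq_deriv_mul (fun x _ => hg.hasDerivAt x)
    (fun x _ => v.hasDerivAt x) (hg.integrable_mul (derivCLM ℝ ℝ v).integrable).integrableOn
    (hg.derivative.integrable_mul v.integrable).integrableOn
    (((hg.continuous.mul v.continuous).tendsto a).mono_left nhdsWithin_le_nhds)
    ((hg.tendsto_mul_cocompact v).mono_left atTop_le_cocompact)

lemma integral_Iic_mul_deriv (v : 𝓢(ℝ, ℝ)) (a : ℝ) :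
    ∫ x in Iic a, g x * deriv v x = g a * v a - ∫ x in Iic a, g' x * v x := by
  simpa using integral_Iic_mul_deriv_eq_deriv_mul (fun x _ => hg.hasDerivAt x)
    (fun x _ => v.hasDerivAt x) (hg.integrable_mul (derivCLM ℝ ℝ v).integrable).integrableOn
    (hg.derivative.integrable_mul v.integrable).integrableOn
    (((hg.continuous.mul v.continuous).tendsto a).mono_left nhdsWithin_le_nhds)
    ((hg.tendsto_mul_cocompact v).mono_left atBot_le_cocompact)

lemma integral_Ioi_mul_deriv_deriv (f : 𝓢(ℝ, ℝ)) (a : ℝ) :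
    ∫ x in Ioi a, g x * deriv (deriv f) x
      = g' a * f a - g a * deriv f a - ∫ x in Ioi a, g x * f x := by
  have h : ∫ x in Ioi a, g x * deriv (deriv f) x
      = -(g a * deriv f a) - ∫ x in Ioi a, g' x * deriv f x :=
    hg.integral_Ioi_mul_deriv (derivCLM ℝ ℝ f) a
  rw [h, hg.derivative.integral_Ioi_mul_deriv f]
  simp only [neg_mul, integral_neg]
  ring

lemma integral_Iic_mul_deriv_deriv (f : 𝓢(ℝ, ℝ)) (a : ℝ) :
    ∫ x in Iic a, g x * deriv (deriv f) x
      = g a * deriv f a - g' a * f a - ∫ x in Iic a, g x * f x := by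
  have h : ∫ x in Iic a, g x * deriv (deriv f) x
      = g a * deriv f a - ∫ x in Iic a, g' x * deriv f x :=
    hg.integral_Iic_mul_deriv (derivCLM ℝ ℝ f) a
  rw [h, hg.derivative.integral_Iic_mul_deriv f]
  simp only [neg_mul, integral_neg]
  ring

lemma integral_mul_deriv_deriv (f : 𝓢(ℝ, ℝ)) :
    ∫ x, g x * deriv (deriv f) x = -∫ x, g x * f x := by
  have hf'' : Integrable (fun x => g x * deriv (deriv f) x) :=
    hg.integrable_mul (derivCLM ℝ ℝ (derivCLM ℝ ℝ f)).integrable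
  have hf : Integrable (fun x => g x * f x) := hg.integrable_mul f.integrable
  rw [← intervalIntegral.integral_Iic_add_Ioi (b := 0) hf''.integrableOn hf''.integrableOn,
    ← intervalIntegral.integral_Iic_add_Ioi (b := 0) hf.integrableOn hf.integrableOn,
    hg.integral_Iic_mul_deriv_deriv, hg.integral_Ioi_mul_deriv_deriv]
  ring

lemma integrable_comp_abs_mul {f : ℝ → ℝ} (hf : Integrable f) :
    Integrable (fun x => g |x| * f x) :=
  hf.bdd_mul (hg.continuous.comp continuous_abs).aestronglyMeasurable
    (ae_of_all _ fun x => hg.abs_le |x|)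

/-- The kink of `x ↦ g |x|` at the origin: `∂ₓ² g(|x|) = g''(|x|) + 2 g'(0) δ`. -/
lemma integral_comp_abs_mul_deriv_deriv (f : 𝓢(ℝ, ℝ)) :
    ∫ x, g |x| * deriv (deriv f) x = 2 * g' 0 * f 0 - ∫ x, g |x| * f x := by
  have hf'' : Integrable (fun x => g |x| * deriv (deriv f) x) :=
    hg.integrable_comp_abs_mul (derivCLM ℝ ℝ (derivCLM ℝ ℝ f)).integrable
  have hf : Integrable (fun x => g |x| * f x) := hg.integrable_comp_abs_mul f.integrable
  have on_Iic (h : ℝ → ℝ) : ∫ x in Iic 0, g |x| * h x = ∫ x in Iic 0, g (-x) * h x :=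
    setIntegral_congr_fun measurableSet_Iic fun x hx => by rw [abs_of_nonpos hx]
  have on_Ioi (h : ℝ → ℝ) : ∫ x in Ioi 0, g |x| * h x = ∫ x in Ioi 0, g x * h x :=
    setIntegral_congr_fun measurableSet_Ioi fun x hx => by rw [abs_of_pos hx]
  rw [← intervalIntegral.integral_Iic_add_Ioi (b := 0) hf''.integrableOn hf''.integrableOn,
    ← intervalIntegral.integral_Iic_add_Ioi (b := 0) hf.integrableOn hf.integrableOn,
    on_Iic, on_Iic, on_Ioi, on_Ioi, hg.comp_neg.integral_Iic_mul_deriv_deriv,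
    hg.integral_Ioi_mul_deriv_deriv]
  simp only [neg_zero]
  ring

end IsHarmonicOscillator

lemma isHarmonicOscillator_sin : IsHarmonicOscillator sin cos :=
  ⟨hasDerivAt_sin, hasDerivAt_cos⟩

lemma isHarmonicOscillator_cos : IsHarmonicOscillator cos (fun x => -sin x) :=
  ⟨hasDerivAt_cos, fun x => (hasDerivAt_sin x).neg⟩

lemma waveOp_apply (φ : 𝓢(ℝ × ℝ, ℝ)) (p : ℝ × ℝ) :
    waveOp φ p = -Dt (Dt φ) p + Dx (Dx φ) p := rfl

namespace IsHarmonicOscillator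

variable {g g' : ℝ → ℝ} (hg : IsHarmonicOscillator g g') (φ : 𝓢(ℝ × ℝ, ℝ))
include hg

lemma integral_mul_Dt_Dt (x : ℝ) :
    ∫ t, g t * Dt (Dt φ) (t, x) = -∫ t, g t * φ (t, x) := by
  simpa only [deriv_sliceT, sliceT_apply] using hg.integral_mul_deriv_deriv (sliceT φ x)

lemma integral_comp_abs_mul_Dx_Dx (t : ℝ) :
    ∫ x, g |x| * Dx (Dx φ) (t, x) = 2 * g' 0 * φ (t, 0) - ∫ x, g |x| * φ (t, x) := by
  simpa only [deriv_sliceX, sliceX_apply] using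
    hg.integral_comp_abs_mul_deriv_deriv (sliceX φ t)

lemma integrable_mul_apply_fst (ψ : 𝓢(ℝ × ℝ, ℝ)) (x : ℝ) :
    Integrable (fun t => g t * ψ (t, x)) :=
  hg.integrable_mul (sliceT ψ x).integrable

lemma integral_mul_waveOp (x : ℝ) :
    ∫ t, g t * waveOp φ (t, x) = (∫ t, g t * φ (t, x)) + ∫ t, g t * Dx (Dx φ) (t, x) := by
  simp only [waveOp_apply, mul_add, mul_neg]
  rw [integral_add (hg.integrable_mul_apply_fst _ x).fun_neg (hg.integrable_mul_apply_fst _ x),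
    integral_neg, hg.integral_mul_Dt_Dt, neg_neg]

lemma integrable_comp_sub_abs_mul (ψ : 𝓢(ℝ × ℝ, ℝ)) :
    Integrable (fun p : ℝ × ℝ => g (p.1 - |p.2|) * ψ p) :=
  ψ.integrable.bdd_mul (hg.continuous.comp (by fun_prop)).aestronglyMeasurable
    (ae_of_all _ fun p => hg.abs_le _)

lemma integral_comp_sub_abs_mul_Dt_Dt :
    ∫ p : ℝ × ℝ, g (p.1 - |p.2|) * Dt (Dt φ) p = -∫ p : ℝ × ℝ, g (p.1 - |p.2|) * φ p := by
  rw [Measure.volume_eq_prod, integral_prod_symm _ (hg.integrable_comp_sub_abs_mul _),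
    integral_prod_symm _ (hg.integrable_comp_sub_abs_mul φ), ← integral_neg]
  congr 1 with x
  exact (hg.comp_sub_const |x|).integral_mul_Dt_Dt φ x

lemma integral_comp_sub_abs_mul_Dx_Dx :
    ∫ p : ℝ × ℝ, g (p.1 - |p.2|) * Dx (Dx φ) p
      = -(2 * ∫ t, g' t * φ (t, 0)) - ∫ p : ℝ × ℝ, g (p.1 - |p.2|) * φ p := by
  rw [Measure.volume_eq_prod, integral_prod _ (hg.integrable_comp_sub_abs_mul _),
    integral_prod _ (hg.integrable_comp_sub_abs_mul φ)]
  have slice (t : ℝ) : ∫ x, g (t - |x|) * Dx (Dx φ) (t, x)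
      = -(2 * (g' t * φ (t, 0))) - ∫ x, g (t - |x|) * φ (t, x) := by
    simpa only [sub_zero, mul_neg, neg_mul, mul_assoc] using (hg.comp_const_sub t).integral_comp_abs_mul_Dx_Dx φ t
  simp_rw [slice]
  rw [integral_sub ((hg.derivative.integrable_mul_apply_fst φ 0).const_mul 2).fun_neg
    (hg.integrable_comp_sub_abs_mul φ).integral_prod_left, integral_neg, integral_const_mul]

/-- `□ g(t - |x|) = -2 g'(t) δ(x)`. -/
lemma integral_comp_sub_abs_mul_waveOp :
    ∫ p : ℝ × ℝ, g (p.1 - |p.2|) * waveOp φ p = -(2 * ∫ t, g' t * φ (t, 0)) := by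
  simp only [waveOp_apply, mul_add, mul_neg]
  rw [integral_add (hg.integrable_comp_sub_abs_mul _).fun_neg (hg.integrable_comp_sub_abs_mul _),
    integral_neg, hg.integral_comp_sub_abs_mul_Dt_Dt, hg.integral_comp_sub_abs_mul_Dx_Dx]
  ring

end IsHarmonicOscillator

/-- `Ψ(t,x) = cos(t)δ(x) + (1/2)sin(t−|x|)` solves `−∂ₜ²Ψ + ∂ₓ²Ψ = cos(t)δ''(x)`
weakly. -/
theorem wave_solution_s2 (φ : SchwartzMap (ℝ × ℝ) ℝ) :
    (∫ t : ℝ, Real.cos t * (waveOp φ) (t, 0))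
      + (∫ p : ℝ × ℝ, ((1 : ℝ) / 2) * Real.sin (p.1 - |p.2|) * (waveOp φ) p)
      = ∫ t : ℝ, Real.cos t * (Dx (Dx φ)) (t, 0) := by
  rw [isHarmonicOscillator_cos.integral_mul_waveOp,
    (isHarmonicOscillator_sin.const_mul (1 / 2)).integral_comp_sub_abs_mul_waveOp]
  have half : ∫ t, 1 / 2 * cos t * φ (t, 0) = 1 / 2 * ∫ t, cos t * φ (t, 0) := by
    simp only [mul_assoc, integral_const_mul]
  rw [half]
  ring
end

section
/- (Conservation of the distributional constraint.) Let F : ℝ → ℝ be continuously differentiable. Let u, p, q : ℝ → (𝓢(ℝ,ℝ) → ℝ) be families of tempered distributions on ℝ such that for every Schwartz function g : ℝ → ℝ the maps t ↦ u(t)(g), t ↦ p(t)(g), t ↦ q(t)(g) are differentiable and satisfy (d/dt)u(t)(g) = −p(t)(g), (d/dt)p(t)(g) = q(t)(g'), and (d/dt)q(t)(g) = p(t)(g') − F'(t)·g(0) for all t. Define C(t)(g) = q(t)(g) + u(t)(g') + F(t)·g(0). Then C(t)(g) = C(0)(g) for all t ∈ ℝ and all Schwartz g. In particular, if the constraint vanishes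 initially (C(0)(g) = 0 for all g), it vanishes for all time. -/
noncomputable def constraintPairing (F : ℝ → ℝ) (u q : ℝ → (SchwartzMap ℝ ℝ →L[ℝ] ℝ)) (t : ℝ)
    (g : SchwartzMap ℝ ℝ) : ℝ :=
  q t g + u t (SchwartzMap.derivCLM ℝ ℝ g) + F t * g 0

/-- The two `p t g'` terms cancel, and so do the two `F'(t) g(0)` terms. -/
theorem hasDerivAt_constraintPairing {F : ℝ → ℝ} {u p q : ℝ → (SchwartzMap ℝ ℝ →L[ℝ] ℝ)}
    {t : ℝ} (g : SchwartzMap ℝ ℝ) (hF : DifferentiableAt ℝ F t)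
    (hu : HasDerivAt (fun s => u s (SchwartzMap.derivCLM ℝ ℝ g))
      (-(p t (SchwartzMap.derivCLM ℝ ℝ g))) t)
    (hq : HasDerivAt (fun s => q s g) (p t (SchwartzMap.derivCLM ℝ ℝ g) - deriv F t * g 0) t) :
    HasDerivAt (fun s => constraintPairing F u q s g) 0 t := by
  have h := (hq.add hu).add (hF.hasDerivAt.mul_const (g 0))
  exact h.congr_deriv (by ring)

theorem constraint_conservation_general (F : ℝ → ℝ) (hF : ContDiff ℝ 1 F)
    (u p q : ℝ → (SchwartzMap ℝ ℝ →L[ℝ] ℝ))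
    (hu : ∀ (g : SchwartzMap ℝ ℝ) (t : ℝ),
      HasDerivAt (fun s => u s g) (-(p t g)) t)
    (hq : ∀ (g : SchwartzMap ℝ ℝ) (t : ℝ),
      HasDerivAt (fun s => q s g)
        (p t (SchwartzMap.derivCLM ℝ ℝ g) - deriv F t * g 0) t)
    (C : ℝ → (SchwartzMap ℝ ℝ → ℝ))
    (hC : C = fun t g => q t g + u t (SchwartzMap.derivCLM ℝ ℝ g) + F t * g 0) :
    ∀ (t : ℝ) (g : SchwartzMap ℝ ℝ), C t g = C 0 g := by
  intro t g
  obtain rfl : C = constraintPairing F u q := hC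
  have hC' : ∀ s, HasDerivAt (fun s => constraintPairing F u q s g) 0 s := fun s =>
    hasDerivAt_constraintPairing g (hF.differentiable one_ne_zero s)
      (hu (SchwartzMap.derivCLM ℝ ℝ g) s) (hq g s)
  exact is_const_of_deriv_eq_zero (fun s => (hC' s).differentiableAt)
    (fun s => (hC' s).deriv) t 0

/-- Conservation of the distributional constraint
`C = φ − ∂ₓψ̄ + F(t)δ(x)` along solutions of the first-order system
`∂ₜψ̄ = −π`, `∂ₜπ = −∂ₓφ`, `∂ₜφ = −∂ₓπ − F'(t)δ(x)` (weak formulation,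
with `u, p, q` standing for `ψ̄, π, φ`). -/
theorem constraint_conservation (F : ℝ → ℝ) (hF : ContDiff ℝ 1 F)
    (u p q : ℝ → (SchwartzMap ℝ ℝ →L[ℝ] ℝ))
    (hu : ∀ (g : SchwartzMap ℝ ℝ) (t : ℝ),
      HasDerivAt (fun s => u s g) (-(p t g)) t)
    (hp : ∀ (g : SchwartzMap ℝ ℝ) (t : ℝ),
      HasDerivAt (fun s => p s g) (q t (SchwartzMap.derivCLM ℝ ℝ g)) t)
    (hq : ∀ (g : SchwartzMap ℝ ℝ) (t : ℝ),
      HasDerivAt (fun s => q s g)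
        (p t (SchwartzMap.derivCLM ℝ ℝ g) - deriv F t * g 0) t)
    (C : ℝ → (SchwartzMap ℝ ℝ → ℝ))
    (hC : C = fun t g => q t g + u t (SchwartzMap.derivCLM ℝ ℝ g) + F t * g 0) :
    ∀ (t : ℝ) (g : SchwartzMap ℝ ℝ), C t g = C 0 g :=
  constraint_conservation_general F hF u p q hu hq C hC
end
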